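/- arXiv:math/0505596 — 2 statements merged into one kernel-verified Lean document; each statement's English description precedes it below -/
import Mathlib

section
/- Let $(r_i)_{i\ge0}$ be nonnegative reals with $\sum_i r_i = 1$, $r_0 > 0$, and mean $\gamma_1 = \sum_i i\, r_i < 1$. Let $Q_0 > 0$ and define $Q_k = \sum_{i=0}^{k} r_i Q_{k-i+1}$ for $k \ge 0$. Then $\lim_{k\to\infty} Q_k = Q_0/(1-\gamma_1)$. -/
/-!
With the tails `R i = ∑_{j > i} r j`, the recurrence telescopes to the renewal identity
`Q (n + 1) = Q 0 + ∑_{i ≤ n} R i * Q (n - i + 1)`, and `∑ R i = γ₁`. The recurrence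
expresses `Q k` as `r 0 * Q (k + 1)` plus a combination of earlier values with total weight
at most `1 - r 0`, so `Q` is nondecreasing; the renewal identity then gives
`(1 - γ₁) * Q (n + 1) ≤ Q 0`. Hence `Q` converges to some `L`, and letting `n → ∞` in the
renewal identity yields `L = Q 0 + γ₁ * L`.
-/

open Filter Finset Topology

theorem HasSum.tendsto_sum_range_mul_of_tendsto {a b : ℕ → ℝ} {s L : ℝ} (ha : HasSum a s)
    (hb : Tendsto b atTop (𝓝 L)) :
    Tendsto (fun n => ∑ i ∈ range (n + 1), a i * b (n - i)) atTop (𝓝 (s * L)) := by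
  obtain ⟨C, hC⟩ := (Metric.isBounded_range_of_tendsto b hb).exists_norm_le
  have hfinite (n : ℕ) : ∑ i ∈ range (n + 1), a i * b (n - i) =
      ∑' i, if i ≤ n then a i * b (n - i) else 0 := by
    rw [tsum_eq_sum (s := range (n + 1)) fun i hi => if_neg (by simpa using hi)]
    exact sum_congr rfl fun i hi => (if_pos (by simpa [Nat.lt_succ_iff] using hi)).symm
  simp_rw [hfinite, ← ha.tsum_eq, ← tsum_mul_right]
  refine tendsto_tsum_of_dominated_convergence (bound := fun i => ‖a i‖ * C)
    (ha.summable.norm.mul_right C) (fun i => ?_) (.of_forall fun n i => ?_)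
  · refine ((hb.comp (tendsto_sub_atTop_nat i)).const_mul (a i)).congr' ?_
    filter_upwards [eventually_ge_atTop i] with n hn
    simp [hn]
  · split_ifs
    · rw [norm_mul]
      exact mul_le_mul_of_nonneg_left (hC _ ⟨_, rfl⟩) (norm_nonneg _)
    · rw [norm_zero]
      exact mul_nonneg (norm_nonneg _) ((norm_nonneg _).trans (hC _ ⟨0, rfl⟩))

noncomputable def tail (r : ℕ → ℝ) (i : ℕ) : ℝ := ∑' j, r (j + (i + 1))

section

variable {r Q : ℕ → ℝ}

theorem tail_nonneg (hr_nonneg : ∀ i, 0 ≤ r i) (i : ℕ) : 0 ≤ tail r i :=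
  tsum_nonneg fun _ => hr_nonneg _

theorem add_tail_zero (hr : Summable r) : r 0 + tail r 0 = ∑' i, r i :=
  hr.tsum_eq_zero_add.symm

theorem tail_eq_add_tail_succ (hr : Summable r) (i : ℕ) :
    tail r i = r (i + 1) + tail r (i + 1) := by
  rw [tail, ((summable_nat_add_iff (i + 1)).2 hr).tsum_eq_zero_add, zero_add, tail]
  simp only [add_assoc, add_comm 1]

theorem sum_range_tail (hr : Summable r) (N : ℕ) :
    ∑ i ∈ range N, tail r i = ∑ n ∈ range (N + 1), (n : ℝ) * r n + N * tail r N := by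
  induction N with
  | zero => simp
  | succ N ih =>
    rw [sum_range_succ, ih, sum_range_succ _ (N + 1), tail_eq_add_tail_succ hr N]
    push_cast
    ring

theorem tendsto_mul_tail (hr_nonneg : ∀ i, 0 ≤ r i) (hr : Summable r)
    (hmean : Summable fun n : ℕ => (n : ℝ) * r n) :
    Tendsto (fun N : ℕ => N * tail r N) atTop (𝓝 0) := by
  have hmean_tail : Tendsto (fun N => ∑' j, ((j + (N + 1) : ℕ) : ℝ) * r (j + (N + 1)))
      atTop (𝓝 0) :=
    (tendsto_sum_nat_add fun n : ℕ => (n : ℝ) * r n).comp (tendsto_add_atTop_nat 1)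
  refine tendsto_of_tendsto_of_tendsto_of_le_of_le tendsto_const_nhds hmean_tail
    (fun N => mul_nonneg N.cast_nonneg (tail_nonneg hr_nonneg N)) fun N => ?_
  rw [tail, ← tsum_mul_left]
  refine Summable.tsum_le_tsum (fun j => ?_) (((summable_nat_add_iff (N + 1)).2 hr).mul_left _)
    ((summable_nat_add_iff (N + 1)).2 hmean)
  exact mul_le_mul_of_nonneg_right (by push_cast; linarith [j.cast_nonneg (α := ℝ)])
    (hr_nonneg _)

theorem hasSum_tail (hr_nonneg : ∀ i, 0 ≤ r i) (hr : Summable r)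
    (hmean : Summable fun n : ℕ => (n : ℝ) * r n) :
    HasSum (tail r) (∑' n : ℕ, n * r n) := by
  rw [hasSum_iff_tendsto_nat_of_nonneg (tail_nonneg hr_nonneg), funext (sum_range_tail hr)]
  simpa using (hmean.hasSum.tendsto_sum_nat.comp (tendsto_add_atTop_nat 1)).add
    (tendsto_mul_tail hr_nonneg hr hmean)

theorem eq_mul_succ_add_sum_range
    (hrec : ∀ k, Q k = ∑ i ∈ range (k + 1), r i * Q (k - i + 1)) (k : ℕ) :
    Q k = r 0 * Q (k + 1) + ∑ i ∈ range k, r (i + 1) * Q (k - (i + 1) + 1) := by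
  rw [hrec k, sum_range_succ', add_comm, Nat.sub_zero]

theorem le_succ_of_recurrence (hr_nonneg : ∀ i, 0 ≤ r i) (hr0 : 0 < r 0)
    (hrec : ∀ k, Q k = ∑ i ∈ range (k + 1), r i * Q (k - i + 1)) {k : ℕ}
    (hmass : ∑ i ∈ range (k + 1), r i ≤ 1) (hQk : 0 ≤ Q k) (hle : ∀ j ≤ k, Q j ≤ Q k) :
    Q k ≤ Q (k + 1) := by
  have hpast : ∑ i ∈ range k, r (i + 1) * Q (k - (i + 1) + 1) ≤ (1 - r 0) * Q k := calc
    _ ≤ ∑ i ∈ range k, r (i + 1) * Q k :=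
      sum_le_sum fun i hi => mul_le_mul_of_nonneg_left (hle _ (by simp at hi; omega))
        (hr_nonneg _)
    _ ≤ (1 - r 0) * Q k := by
      rw [← sum_mul]
      refine mul_le_mul_of_nonneg_right ?_ hQk
      linarith [sum_range_succ' r k]
  nlinarith [eq_mul_succ_add_sum_range hrec k]

theorem monotone_of_recurrence (hr_nonneg : ∀ i, 0 ≤ r i) (hr0 : 0 < r 0)
    (hmass : ∀ k, ∑ i ∈ range (k + 1), r i ≤ 1) (hQ0 : 0 ≤ Q 0)
    (hrec : ∀ k, Q k = ∑ i ∈ range (k + 1), r i * Q (k - i + 1)) : Monotone Q := by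
  have hmono_upto (k : ℕ) : ∀ j ≤ k, Q j ≤ Q k := by
    induction k with
    | zero => simp
    | succ k ih =>
      have hstep := le_succ_of_recurrence hr_nonneg hr0 hrec (hmass k)
        (hQ0.trans (ih 0 k.zero_le)) ih
      intro j hj
      rcases Nat.le_succ_iff.1 hj with hj | rfl
      exacts [(ih j hj).trans hstep, le_rfl]
  exact monotone_nat_of_le_succ fun k => hmono_upto (k + 1) k k.le_succ

theorem eq_add_sum_range_tail_mul (hr : Summable r) (hr_sum : ∑' i, r i = 1)
    (hrec : ∀ k, Q k = ∑ i ∈ range (k + 1), r i * Q (k - i + 1)) (n : ℕ) :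
    Q (n + 1) = Q 0 + ∑ i ∈ range (n + 1), tail r i * Q (n - i + 1) := by
  have hr0_tail : r 0 + tail r 0 = 1 := (add_tail_zero hr).trans hr_sum
  induction n with
  | zero =>
    have h0 : Q 0 = r 0 * Q 1 := by simpa using hrec 0
    simp only [zero_add, sum_range_one, Nat.sub_zero]
    linear_combination -h0 - Q 1 * hr0_tail
  | succ n ih =>
    have hshift : ∑ i ∈ range (n + 1), tail r (i + 1) * Q (n + 1 - (i + 1) + 1) =
        ∑ i ∈ range (n + 1), tail r i * Q (n - i + 1) -
          ∑ i ∈ range (n + 1), r (i + 1) * Q (n + 1 - (i + 1) + 1) := by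
      rw [← sum_sub_distrib]
      refine sum_congr rfl fun i _ => ?_
      rw [tail_eq_add_tail_succ hr i, Nat.add_sub_add_right]
      ring
    rw [sum_range_succ', Nat.sub_zero, hshift]
    linear_combination ih - eq_mul_succ_add_sum_range hrec (n + 1) - Q (n + 1 + 1) * hr0_tail

theorem one_sub_mul_le_of_recurrence (hr_nonneg : ∀ i, 0 ≤ r i) (hr : Summable r)
    (hr_sum : ∑' i, r i = 1) (hmean : Summable fun n : ℕ => (n : ℝ) * r n) (hQ0 : 0 ≤ Q 0)
    (hmono : Monotone Q) (hrec : ∀ k, Q k = ∑ i ∈ range (k + 1), r i * Q (k - i + 1)) (n : ℕ) :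
    (1 - ∑' i : ℕ, (i : ℝ) * r i) * Q (n + 1) ≤ Q 0 := by
  have htail := hasSum_tail hr_nonneg hr hmean
  have hQ : 0 ≤ Q (n + 1) := hQ0.trans (hmono (Nat.zero_le _))
  have hconv : ∑ i ∈ range (n + 1), tail r i * Q (n - i + 1) ≤
      (∑' i : ℕ, (i : ℝ) * r i) * Q (n + 1) := calc
    _ ≤ ∑ i ∈ range (n + 1), tail r i * Q (n + 1) :=
      sum_le_sum fun i _ =>
        mul_le_mul_of_nonneg_left (hmono (by omega)) (tail_nonneg hr_nonneg i)
    _ ≤ _ := by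
      rw [← sum_mul, ← htail.tsum_eq]
      exact mul_le_mul_of_nonneg_right
        (htail.summable.sum_le_tsum _ fun i _ => tail_nonneg hr_nonneg i) hQ
  linarith [eq_add_sum_range_tail_mul hr hr_sum hrec n]

end

theorem stmt1 (r Q : ℕ → ℝ)
    (hr_nonneg : ∀ i, 0 ≤ r i) (hr_sum : ∑' i, r i = 1) (hr0 : 0 < r 0)
    (hmean_summable : Summable (fun i : ℕ => (i : ℝ) * r i))
    (hmean_lt : ∑' i : ℕ, (i : ℝ) * r i < 1)
    (hQ0 : 0 < Q 0)
    (hrec : ∀ k, Q k = ∑ i ∈ Finset.range (k + 1), r i * Q (k - i + 1)) :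
    Tendsto Q atTop (nhds (Q 0 / (1 - ∑' i : ℕ, (i : ℝ) * r i))) := by
  set γ := ∑' i : ℕ, (i : ℝ) * r i
  have hr : Summable r := by
    by_contra h
    simp [tsum_eq_zero_of_not_summable h] at hr_sum
  have hmono : Monotone Q := monotone_of_recurrence hr_nonneg hr0
    (fun k => hr_sum ▸ hr.sum_le_tsum _ fun i _ => hr_nonneg i) hQ0.le hrec
  have hbdd : BddAbove (Set.range Q) := by
    refine ⟨Q 0 / (1 - γ), ?_⟩
    rintro _ ⟨n, rfl⟩
    rw [le_div_iff₀ (by linarith), mul_comm]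
    exact (mul_le_mul_of_nonneg_left (hmono n.le_succ) (by linarith)).trans
      (one_sub_mul_le_of_recurrence hr_nonneg hr hr_sum hmean_summable hQ0.le hmono hrec n)
  obtain ⟨L, hL⟩ : ∃ L, Tendsto Q atTop (𝓝 L) := ⟨_, tendsto_atTop_ciSup hmono hbdd⟩
  have hL_succ := hL.comp (tendsto_add_atTop_nat 1)
  have hconv :=
    (hasSum_tail hr_nonneg hr hmean_summable).tendsto_sum_range_mul_of_tendsto hL_succ
  have hrenewal : Tendsto (fun n => Q (n + 1)) atTop (𝓝 (Q 0 + γ * L)) :=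
    (tendsto_const_nhds.add hconv).congr fun n => (eq_add_sum_range_tail_mul hr hr_sum hrec n).symm
  have hL_eq : L = Q 0 + γ * L := tendsto_nhds_unique hL_succ hrenewal
  rwa [show Q 0 / (1 - γ) = L by rw [div_eq_iff (by linarith)]; linarith]
end

section
/- Let $(\mathbf{E}T_K)_{K\ge0}$ satisfy the recurrence $\mathbf{E}T_K = \sum_{j=0}^{K} \pi_j\, \mathbf{E}T_{K-j+1}$ with $\mathbf{E}T_0 = b$, where $\pi_j = \int_0^\infty e^{-\lambda x} \frac{(\lambda x)^j}{j!} dB(x)$, $b$ is the mean of $B$, and $\varrho = \lambda b < 1$. Then $\lim_{K\to\infty} \mathbf{E}T_K = \frac{b}{1-\varrho}$. -/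
/-!
Summing the recurrence over `K ≤ n` turns it into the renewal equation
`ET (n + 1) = b + ∑_{j ≤ n} r_j ET (n + 1 - j)`, where `r_j = 1 - (π_0 + ⋯ + π_j)` is the tail
of the number `A` of arrivals during one service, so that `∑ r_j = E A = ϱ < 1`. Since `r_0 < 1`, a
renewal equation with nonnegative kernel and nonnegative forcing has only nonnegative solutions;
applied to `ET`, to `b / (1 - ϱ) - ET` and to the increments of `ET`, this shows that `ET` is
monotone and bounded by `b / (1 - ϱ)`. Hence `ET` converges, and its limit `L` satisfies
`L = b + ϱ L`.
-/

open MeasureTheory Filter Topology Finset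

noncomputable def poissonWeight (lam x : ℝ) (j : ℕ) : ℝ :=
  Real.exp (-lam * x) * (lam * x) ^ j / j.factorial

lemma hasSum_poissonWeight (lam x : ℝ) : HasSum (poissonWeight lam x) 1 := by
  have h := (NormedSpace.expSeries_div_hasSum_exp (lam * x)).mul_left (Real.exp (-lam * x))
  rw [← Real.exp_eq_exp_ℝ, ← Real.exp_add, neg_mul, neg_add_cancel, Real.exp_zero] at h
  show HasSum (fun j : ℕ => Real.exp (-lam * x) * (lam * x) ^ j / j.factorial) 1
  simpa only [neg_mul, mul_div_assoc] using h

lemma hasSum_natCast_mul_poissonWeight (lam x : ℝ) :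
    HasSum (fun j : ℕ => j * poissonWeight lam x j) (lam * x) := by
  set f : ℕ → ℝ := fun j => j * poissonWeight lam x j
  have hshift : (fun j => f (j + 1)) = fun j => lam * x * poissonWeight lam x j := by
    ext j
    simp only [f, poissonWeight, Nat.factorial_succ, Nat.cast_mul, Nat.cast_succ, pow_succ]
    field_simp
  have h := (hasSum_poissonWeight lam x).mul_left (lam * x)
  rw [mul_one, ← hshift, hasSum_nat_add_iff] at h
  simpa [f] using h

lemma poissonWeight_nonneg {lam x : ℝ} (h : 0 ≤ lam * x) (j : ℕ) :
    0 ≤ poissonWeight lam x j := by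
  unfold poissonWeight; positivity

lemma measurable_poissonWeight (lam : ℝ) (j : ℕ) :
    Measurable fun x => poissonWeight lam x j := by
  unfold poissonWeight; fun_prop

lemma hasSum_integral_of_nonneg {α ι : Type*} [MeasurableSpace α] [Countable ι]
    {μ : Measure α} {F : ι → α → ℝ} {f : α → ℝ} (hF_meas : ∀ n, AEStronglyMeasurable (F n) μ)
    (hF_nonneg : ∀ n, 0 ≤ᵐ[μ] F n) (hf : Integrable f μ)
    (h_lim : ∀ᵐ a ∂μ, HasSum (fun n => F n a) (f a)) :
    HasSum (fun n => ∫ a, F n a ∂μ) (∫ a, f a ∂μ) :=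
  hasSum_integral_of_dominated_convergence F hF_meas
    (fun n => (hF_nonneg n).mono fun _ ha => (Real.norm_of_nonneg ha).le)
    (h_lim.mono fun _ ha => ha.summable) (hf.congr (h_lim.mono fun _ ha => ha.tsum_eq.symm)) h_lim

/-- `π_j`: the probability of `j` arrivals of a rate-`lam` Poisson process during a
`B`-distributed service time. -/
noncomputable def mixedPoissonPMF (B : Measure ℝ) (lam : ℝ) (j : ℕ) : ℝ :=
  ∫ x, poissonWeight lam x j ∂B

section MixedPoisson

variable {B : Measure ℝ} {lam : ℝ}

lemma ae_poissonWeight_nonneg (hB : ∀ᵐ x ∂B, 0 ≤ x) (hlam : 0 ≤ lam) (j : ℕ) :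
    ∀ᵐ x ∂B, 0 ≤ poissonWeight lam x j :=
  hB.mono fun _ hx => poissonWeight_nonneg (mul_nonneg hlam hx) j

lemma mixedPoissonPMF_nonneg (hB : ∀ᵐ x ∂B, 0 ≤ x) (hlam : 0 ≤ lam) :
    0 ≤ mixedPoissonPMF B lam :=
  fun j => integral_nonneg_of_ae (ae_poissonWeight_nonneg hB hlam j)

lemma mixedPoissonPMF_zero_pos [IsProbabilityMeasure B] (hB : ∀ᵐ x ∂B, 0 ≤ x)
    (hlam : 0 ≤ lam) :
    0 < mixedPoissonPMF B lam 0 := by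
  simp only [mixedPoissonPMF, poissonWeight, pow_zero, Nat.factorial_zero, Nat.cast_one, mul_one,
    div_one]
  refine integral_exp_pos (Integrable.mono' (integrable_const 1) (by fun_prop) ?_)
  filter_upwards [hB] with x hx
  rw [Real.norm_of_nonneg (Real.exp_nonneg _), Real.exp_le_one_iff, neg_mul, neg_nonpos]
  exact mul_nonneg hlam hx

lemma hasSum_mixedPoissonPMF [IsProbabilityMeasure B] (hB : ∀ᵐ x ∂B, 0 ≤ x)
    (hlam : 0 ≤ lam) :
    HasSum (mixedPoissonPMF B lam) 1 := by
  have h := hasSum_integral_of_nonneg (f := fun _ => (1 : ℝ))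
    (fun j => (measurable_poissonWeight lam j).aestronglyMeasurable)
    (ae_poissonWeight_nonneg hB hlam) (integrable_const 1)
    (ae_of_all _ fun x => hasSum_poissonWeight lam x)
  rwa [show ∫ _, (1 : ℝ) ∂B = 1 by simp] at h

lemma hasSum_natCast_mul_mixedPoissonPMF (hB : ∀ᵐ x ∂B, 0 ≤ x) (hlam : 0 ≤ lam)
    (hInt : Integrable (fun x => x) B) :
    HasSum (fun j : ℕ => j * mixedPoissonPMF B lam j) (lam * ∫ x, x ∂B) := by
  have h := hasSum_integral_of_nonneg (f := fun x => lam * x)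
    (fun j => (measurable_poissonWeight lam j).aestronglyMeasurable.const_mul (j : ℝ))
    (fun j => (ae_poissonWeight_nonneg hB hlam j).mono fun _ hx => mul_nonneg j.cast_nonneg hx)
    (hInt.const_mul lam) (ae_of_all _ fun x => hasSum_natCast_mul_poissonWeight lam x)
  simp only [mixedPoissonPMF, ← integral_const_mul]
  exact h

end MixedPoisson

noncomputable def tailProb (p : ℕ → ℝ) (j : ℕ) : ℝ := 1 - ∑ i ∈ range (j + 1), p i

lemma tailProb_nonneg {p : ℕ → ℝ} (hp : 0 ≤ p) (h1 : HasSum p 1) (j : ℕ) :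
    0 ≤ tailProb p j :=
  sub_nonneg.2 (sum_le_hasSum _ (fun i _ => hp i) h1)

lemma tailProb_zero (p : ℕ → ℝ) : tailProb p 0 = 1 - p 0 := by simp [tailProb]

lemma tailProb_succ (p : ℕ → ℝ) (j : ℕ) :
    tailProb p (j + 1) = tailProb p j - p (j + 1) := by
  rw [tailProb, tailProb, sum_range_succ _ (j + 1)]; ring

lemma eq_add_sum_tailProb_mul {p x : ℕ → ℝ}
    (hrec : ∀ K, x K = ∑ j ∈ range (K + 1), p j * x (K - j + 1)) (n : ℕ) :
    x (n + 1) = x 0 + ∑ j ∈ range (n + 1), tailProb p j * x (n - j + 1) := by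
  induction n with
  | zero =>
    have h0 := hrec 0
    simp only [zero_add, sum_range_one, Nat.sub_self] at h0 ⊢
    rw [tailProb_zero]
    linear_combination -h0
  | succ n ih =>
    have hrec' := hrec (n + 1)
    rw [sum_range_succ'] at hrec' ⊢
    simp only [Nat.add_sub_add_right, tailProb_succ, sub_mul, sum_sub_distrib, Nat.sub_zero,
      tailProb_zero] at hrec' ⊢
    linear_combination ih - hrec'

lemma hasSum_tailProb {p : ℕ → ℝ} {m : ℝ} (hp : 0 ≤ p) (h1 : HasSum p 1)
    (hm : HasSum (fun i : ℕ => (i : ℝ) * p i) m) : HasSum (tailProb p) m := by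
  -- Both sides sum `p i` over the pairs `j < i`, by columns `j` and by rows `i` respectively.
  set G : ℕ × ℕ → ℝ := fun ij => if ij.2 < ij.1 then p ij.1 else 0
  have hG0 : 0 ≤ G := fun ij => by dsimp only [G]; split_ifs; exacts [hp _, le_rfl]
  have hrow : ∀ i, HasSum (fun j => G (i, j)) (i * p i) := by
    intro i
    have h : HasSum (fun j => G (i, j)) (∑ j ∈ range i, G (i, j)) :=
      hasSum_sum_of_ne_finset_zero fun j hj => by simp [G, mem_range.not.1 hj]
    convert h using 1
    rw [sum_congr rfl fun j hj => (if_pos (mem_range.1 hj) : G (i, j) = p i)]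
    simp
  have hcol : ∀ j, HasSum (fun i => G (i, j)) (tailProb p j) := by
    intro j
    have hhead : HasSum (fun i => if i < j + 1 then p i else 0)
        (∑ i ∈ range (j + 1), if i < j + 1 then p i else 0) :=
      hasSum_sum_of_ne_finset_zero fun i hi => by simp [mem_range.not.1 hi]
    have hcongr : (fun i => p i - if i < j + 1 then p i else 0) = fun i => G (i, j) := by
      ext i; dsimp only [G]; split_ifs <;> first | (exfalso; omega) | ring
    rw [← hcongr, tailProb, ← sum_congr rfl fun i hi => if_pos (mem_range.1 hi)]
    exact h1.sub hhead
  have hG : HasSum G m := by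
    have hsum : Summable G := (summable_prod_of_nonneg hG0).2
      ⟨fun i => (hrow i).summable, by simpa only [(hrow _).tsum_eq] using hm.summable⟩
    rw [← (hsum.hasSum.prod_fiberwise hrow).unique hm]
    exact hsum.hasSum
  rw [← (Equiv.prodComm ℕ ℕ).hasSum_iff] at hG
  exact hG.prod_fiberwise hcol

section Renewal

variable {r u : ℕ → ℝ}

lemma renewal_nonneg {f : ℕ → ℝ} (hr : 0 ≤ r) (hr0 : r 0 < 1) (hf : 0 ≤ f)
    (hu : ∀ n, u n = f n + ∑ j ∈ range (n + 1), r j * u (n - j)) (n : ℕ) : 0 ≤ u n := by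
  induction n using Nat.strong_induction_on with
  | _ n ih =>
    have hpast : 0 ≤ ∑ j ∈ range n, r (j + 1) * u (n - (j + 1)) :=
      sum_nonneg fun j hj => mul_nonneg (hr _) (ih _ (by have := mem_range.1 hj; omega))
    have h := hu n
    rw [sum_range_succ', Nat.sub_zero] at h
    have hsolve : (1 - r 0) * u n = f n + ∑ j ∈ range n, r (j + 1) * u (n - (j + 1)) := by
      linear_combination h
    exact nonneg_of_mul_nonneg_right (hsolve ▸ add_nonneg (hf n) hpast) (sub_pos.2 hr0)

lemma renewal_le_div {f : ℕ → ℝ} {ρ c : ℝ} (hr : 0 ≤ r) (hr0 : r 0 < 1)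
    (hρ : HasSum r ρ) (hρ1 : ρ < 1) (hc : 0 ≤ c) (hf : ∀ n, f n ≤ c)
    (hu : ∀ n, u n = f n + ∑ j ∈ range (n + 1), r j * u (n - j)) (n : ℕ) :
    u n ≤ c / (1 - ρ) := by
  set M := c / (1 - ρ)
  have hM : M * (1 - ρ) = c := div_mul_cancel₀ _ (by linarith)
  have hM0 : 0 ≤ M := div_nonneg hc (by linarith)
  refine sub_nonneg.1 (renewal_nonneg (u := fun n => M - u n)
    (f := fun n => M * (1 - ∑ j ∈ range (n + 1), r j) - f n) hr hr0 (fun n => ?_) (fun n => ?_)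
    n)
  · have hpartial := sum_le_hasSum (range (n + 1)) (fun i _ => hr i) hρ
    show 0 ≤ M * (1 - ∑ j ∈ range (n + 1), r j) - f n
    nlinarith [hf n, mul_le_mul_of_nonneg_left hpartial hM0]
  · rw [hu n]
    simp only [mul_sub, sum_sub_distrib, ← sum_mul]
    ring

lemma renewal_monotone {c : ℝ} (hr : 0 ≤ r) (hr0 : r 0 < 1) (hc : 0 ≤ c)
    (hu : ∀ n, u n = c + ∑ j ∈ range (n + 1), r j * u (n - j)) : Monotone u := by
  have hu0 : 0 ≤ u 0 := renewal_nonneg hr hr0 (fun _ => hc) hu 0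
  refine monotone_nat_of_le_succ fun n => sub_nonneg.1 ?_
  refine renewal_nonneg (u := fun n => u (n + 1) - u n) (f := fun n => r (n + 1) * u 0) hr hr0
    (fun n => mul_nonneg (hr _) hu0) (fun n => ?_) n
  have hshift : ∑ j ∈ range (n + 1), r j * u (n + 1 - j)
      = ∑ j ∈ range (n + 1), r j * u (n - j + 1) :=
    sum_congr rfl fun j hj => by rw [Nat.sub_add_comm (mem_range_succ_iff.1 hj)]
  rw [hu (n + 1), hu n, sum_range_succ _ (n + 1), Nat.sub_self, hshift]
  simp only [mul_sub, sum_sub_distrib]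
  ring

lemma tendsto_sum_range_mul_sub {ρ L : ℝ} (hr : 0 ≤ r) (hρ : HasSum r ρ)
    (hu : Tendsto u atTop (𝓝 L)) :
    Tendsto (fun n => ∑ j ∈ range (n + 1), r j * u (n - j)) atTop (𝓝 (ρ * L)) := by
  obtain ⟨M, hM⟩ := hu.norm.bddAbove_range
  have hM' : ∀ n, ‖u n‖ ≤ M := fun n => hM ⟨n, rfl⟩
  set F : ℕ → ℕ → ℝ := fun n j => if j ≤ n then r j * u (n - j) else 0
  have hF : ∀ n, ∑' j, F n j = ∑ j ∈ range (n + 1), r j * u (n - j) := fun n => by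
    rw [tsum_eq_sum (s := range (n + 1)) fun j hj => if_neg (by simpa using hj)]
    exact sum_congr rfl fun j hj => if_pos (mem_range_succ_iff.1 hj)
  have h := tendsto_tsum_of_dominated_convergence (𝓕 := atTop) (f := F) (g := fun j => r j * L)
    (bound := fun j => r j * M) (hρ.summable.mul_right M) (fun j => ?_)
    (Eventually.of_forall fun n j => ?_)
  · simpa only [hF, tsum_mul_right, hρ.tsum_eq] using h
  · refine ((hu.comp (tendsto_sub_atTop_nat j)).const_mul (r j)).congr' ?_
    filter_upwards [eventually_ge_atTop j] with n hn
    simp [F, hn]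
  · simp only [F]
    split_ifs
    · rw [norm_mul, Real.norm_of_nonneg (hr j)]
      exact mul_le_mul_of_nonneg_left (hM' _) (hr j)
    · simpa using mul_nonneg (hr j) ((norm_nonneg _).trans (hM' 0))

lemma tendsto_renewal {ρ c : ℝ} (hr : 0 ≤ r) (hr0 : r 0 < 1) (hρ : HasSum r ρ)
    (hρ1 : ρ < 1) (hc : 0 ≤ c) (hu : ∀ n, u n = c + ∑ j ∈ range (n + 1), r j * u (n - j)) :
    Tendsto u atTop (𝓝 (c / (1 - ρ))) := by
  have hbdd : BddAbove (Set.range u) := ⟨c / (1 - ρ), Set.forall_mem_range.2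
    (renewal_le_div hr hr0 hρ hρ1 hc (fun _ => le_rfl) hu)⟩
  have hL := tendsto_atTop_ciSup (renewal_monotone hr hr0 hc hu) hbdd
  have hfix : ⨆ n, u n = c + ρ * ⨆ n, u n := tendsto_nhds_unique hL
    (((tendsto_sum_range_mul_sub hr hρ hL).const_add c).congr fun n => (hu n).symm)
  have hsup : ⨆ n, u n = c / (1 - ρ) := by
    rw [eq_div_iff (by linarith)]
    linarith
  rwa [hsup] at hL

theorem stmt10 (B : Measure ℝ) [IsProbabilityMeasure B]
    (hB_nonneg : ∀ᵐ x ∂B, 0 ≤ x)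
    (hInt : Integrable (fun x => x) B)
    (lam b : ℝ) (hlam : 0 < lam) (hb : b = ∫ x, x ∂B) (hbpos : 0 < b)
    (hload : lam * b < 1)
    (ET : ℕ → ℝ) (hET0 : ET 0 = b)
    (hrec : ∀ K, ET K = ∑ j ∈ Finset.range (K + 1),
      (∫ x, Real.exp (-lam * x) * (lam * x) ^ j / (Nat.factorial j) ∂B) * ET (K - j + 1)) :
    Tendsto ET atTop (nhds (b / (1 - lam * b))) := by
  set p := mixedPoissonPMF B lam
  have hp : 0 ≤ p := mixedPoissonPMF_nonneg hB_nonneg hlam.le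
  have hp1 : HasSum p 1 := hasSum_mixedPoissonPMF hB_nonneg hlam.le
  have hmean : HasSum (fun j : ℕ => (j : ℝ) * p j) (lam * b) :=
    hb ▸ hasSum_natCast_mul_mixedPoissonPMF hB_nonneg hlam.le hInt
  have hr0 : tailProb p 0 < 1 := by
    rw [tailProb_zero]
    linarith [mixedPoissonPMF_zero_pos hB_nonneg hlam.le]
  have hrenewal : ∀ n, ET (n + 1) = b + ∑ j ∈ range (n + 1), tailProb p j * ET (n - j + 1) :=
    hET0 ▸ eq_add_sum_tailProb_mul hrec
  exact (tendsto_add_atTop_iff_nat 1).1 <| tendsto_renewal (u := fun n => ET (n + 1))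
    (tailProb_nonneg hp hp1) hr0 (hasSum_tailProb hp hp1 hmean) hload hbpos.le hrenewal
end Renewal
end
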